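/- arXiv:0904.0945 — 3 statements merged into one kernel-verified Lean document; each statement's English description precedes it below -/
import Mathlib

section
/- For all ψ, χ ∈ F[x,y,z], the Schouten bracket of the two exact brackets vanishes: [{·,·}_ψ, {·,·}_χ]_S = 0, i.e. for all F,G,H ∈ A one has {{F,G}_χ,H}_ψ − {{F,H}_χ,G}_ψ + {{G,H}_χ,F}_ψ + {{F,G}_ψ,H}_χ − {{F,H}_ψ,G}_χ + {{G,H}_ψ,F}_χ = 0. In particular any two exact Poisson structures {·,·}_ψ and {·,·}_χ are compatible. -/
open MvPolynomial


lemma pderiv_pderiv_comm {F : Type*} [CommSemiring F] {σ : Type*} [DecidableEq σ]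
    (i j : σ) (f : MvPolynomial σ F) :
    pderiv i (pderiv j f) = pderiv j (pderiv i f) := by
  induction f using MvPolynomial.induction_on with
  | C a => simp
  | add p q hp hq => simp [hp, hq]
  | mul_X p n ih =>
      simp only [pderiv_mul, map_add, pderiv_mul, ih]
      by_cases h : n = i <;> by_cases h' : n = j <;>
        subst_vars <;> simp [pderiv_X, Pi.single_apply, *]

/-- The exact Poisson bracket `{P,Q}_ψ = det Jac(ψ,P,Q)` on `F[x,y,z]`. -/
noncomputable def pbr {F : Type*} [Field F] (ψ P Q : MvPolynomial (Fin 3) F) :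
    MvPolynomial (Fin 3) F :=
  pderiv 0 ψ * (pderiv 1 P * pderiv 2 Q - pderiv 2 P * pderiv 1 Q)
  + pderiv 1 ψ * (pderiv 2 P * pderiv 0 Q - pderiv 0 P * pderiv 2 Q)
  + pderiv 2 ψ * (pderiv 0 P * pderiv 1 Q - pderiv 1 P * pderiv 0 Q)


/-- The Schouten bracket of two (biderivation) brackets, as a trilinear map. -/
noncomputable def schouten {F : Type*} [Field F]
    (P Q : MvPolynomial (Fin 3) F → MvPolynomial (Fin 3) F → MvPolynomial (Fin 3) F)
    (a b c : MvPolynomial (Fin 3) F) : MvPolynomial (Fin 3) F :=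
  P (Q a b) c - P (Q a c) b + P (Q b c) a + Q (P a b) c - Q (P a c) b + Q (P b c) a

/-- the Schouten bracket of two exact brackets vanishes; in particular any two
exact Poisson structures are compatible. -/
theorem statement2 {F : Type*} [Field F] [CharZero F] (ψ χ : MvPolynomial (Fin 3) F) :
    ∀ P Q R : MvPolynomial (Fin 3) F,
      pbr ψ (pbr χ P Q) R - pbr ψ (pbr χ P R) Q + pbr ψ (pbr χ Q R) P
        + pbr χ (pbr ψ P Q) R - pbr χ (pbr ψ P R) Q + pbr χ (pbr ψ Q R) P = 0 := by
  intro P Q R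
  simp only [pbr, map_add, map_sub, pderiv_mul,
    pderiv_pderiv_comm (1 : Fin 3) 0, pderiv_pderiv_comm (2 : Fin 3) 0,
    pderiv_pderiv_comm (2 : Fin 3) 1]
  ring
end

section
/- For all f, g, l, h ∈ A = F[x,y,z] and all F₁, F₂, F₃ ∈ A, the Schouten bracket of the bivector fields f·{·,·}_l and g·{·,·}_h is given explicitly by [f·{·,·}_l, g·{·,·}_h]_S(F₁,F₂,F₃) = ( f·{g,h}_l + g·{f,l}_h ) · det Jac(F₁,F₂,F₃), where det Jac(F₁,F₂,F₃) denotes the determinant of the Jacobian matrix of (F₁,F₂,F₃) with respect to (x,y,z). -/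
open MvPolynomial

private lemma pd_comm {F : Type*} [Field F] (i j : Fin 3) (p : MvPolynomial (Fin 3) F) :
    pderiv i (pderiv j p) = pderiv j (pderiv i p) := by
  induction p using MvPolynomial.induction_on with
  | C a => simp
  | add p q hp hq => simp [hp, hq]
  | mul_X p n hp =>
    simp only [pderiv_mul, map_add, hp]
    have h1 : pderiv i (pderiv j (X n : MvPolynomial (Fin 3) F)) = 0 := by
      fin_cases j <;> fin_cases n <;> simp
    have h2 : pderiv j (pderiv i (X n : MvPolynomial (Fin 3) F)) = 0 := by
      fin_cases i <;> fin_cases n <;> simp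
    rw [h1, h2]; ring

private lemma pd10 {F : Type*} [Field F] (p : MvPolynomial (Fin 3) F) :
    pderiv 1 (pderiv 0 p) = pderiv 0 (pderiv 1 p) := pd_comm 1 0 p
private lemma pd20 {F : Type*} [Field F] (p : MvPolynomial (Fin 3) F) :
    pderiv 2 (pderiv 0 p) = pderiv 0 (pderiv 2 p) := pd_comm 2 0 p
private lemma pd21 {F : Type*} [Field F] (p : MvPolynomial (Fin 3) F) :
    pderiv 2 (pderiv 1 p) = pderiv 1 (pderiv 2 p) := pd_comm 2 1 p

/-- explicit formula for the Schouten bracket of f·{·,·}_l and g·{·,·}_h: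
it equals (f·{g,h}_l + g·{f,l}_h) · det Jac(F₁,F₂,F₃). Note that
det Jac(F₁,F₂,F₃) = pbr F₁ F₂ F₃. -/
theorem statement3 {F : Type*} [Field F] [CharZero F] (f g l h : MvPolynomial (Fin 3) F) :
    ∀ F₁ F₂ F₃ : MvPolynomial (Fin 3) F,
      schouten (fun P Q => f * pbr l P Q) (fun P Q => g * pbr h P Q) F₁ F₂ F₃
        = (f * pbr l g h + g * pbr h f l) * pbr F₁ F₂ F₃ := by
  intro F₁ F₂ F₃
  simp only [schouten, pbr, pderiv_mul, map_add, map_sub, pd10, pd20, pd21]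
  ring
end

section
/- For all f, g, l, h ∈ A = F[x,y,z], the Schouten bracket of bivector fields of the form f·{·,·}_l is antisymmetric under exchanging l and h: [f·{·,·}_l, g·{·,·}_h]_S = −[f·{·,·}_h, g·{·,·}_l]_S as trilinear maps A × A × A → A. -/
open MvPolynomial

theorem pderiv_comm' {R : Type*} [CommSemiring R] {σ : Type*} [DecidableEq σ] (i j : σ)
    (p : MvPolynomial σ R) : pderiv i (pderiv j p) = pderiv j (pderiv i p) := by
  induction p using MvPolynomial.induction_on with
  | C a => simp
  | add p q hp hq => simp [hp, hq]
  | mul_X p k hp =>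
    simp only [pderiv_mul, pderiv_X, Pi.single_apply, map_add, hp]
    split_ifs <;> (simp [hp]; try ring)

theorem c10 {R : Type*} [CommSemiring R] (p : MvPolynomial (Fin 3) R) :
    pderiv 1 (pderiv 0 p) = pderiv 0 (pderiv 1 p) := pderiv_comm' _ _ _
theorem c20 {R : Type*} [CommSemiring R] (p : MvPolynomial (Fin 3) R) :
    pderiv 2 (pderiv 0 p) = pderiv 0 (pderiv 2 p) := pderiv_comm' _ _ _
theorem c21 {R : Type*} [CommSemiring R] (p : MvPolynomial (Fin 3) R) :
    pderiv 2 (pderiv 1 p) = pderiv 1 (pderiv 2 p) := pderiv_comm' _ _ _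

set_option maxHeartbeats 0 in
theorem statement4 {F : Type*} [Field F] [CharZero F] (f g l h : MvPolynomial (Fin 3) F) :
    ∀ F₁ F₂ F₃ : MvPolynomial (Fin 3) F,
      schouten (fun P Q => f * pbr l P Q) (fun P Q => g * pbr h P Q) F₁ F₂ F₃
        = - schouten (fun P Q => f * pbr h P Q) (fun P Q => g * pbr l P Q) F₁ F₂ F₃ := by
  intro F₁ F₂ F₃
  simp only [schouten, pbr, pderiv_mul, map_add, map_sub, c10, c20, c21]
  ring
end
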